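/- arXiv:1912.02548 — 2 statements merged into one kernel-verified Lean document; each statement's English description precedes it below -/
import Mathlib

section
/- Let f ∈ ℤ[a₁,a₂,a₃,a₄,a₆]. Then f is invariant, i.e. φ(f) equals the image of f under the canonical inclusion, if and only if f lies in the ℤ-subalgebra of ℤ[a₁,a₂,a₃,a₄,a₆] generated by b₂, b₄, b₆, b₈. (This is the degree-zero cohomology of the Hopf algebroid (D,Σ) presenting the moduli stack of cubic curves with a chosen splitting of the Hodge–de Rham exact sequence: the ring of integral quasimodular forms is ℤ[b₂,b₄,b₆,b₈].) -/
open MvPolynomial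

noncomputable section

/-- `D = ℤ[a₁, a₂, a₃, a₄, a₆]`, with variables indexed `0 ↦ a₁, 1 ↦ a₂, 2 ↦ a₃, 3 ↦ a₄,
`4 ↦ a₆`. -/
abbrev D : Type := MvPolynomial (Fin 5) ℤ

/-- `Σ = D[s, t]`, with `0 ↦ s` and `1 ↦ t`. -/
abbrev Sg : Type := MvPolynomial (Fin 2) D

def a1 : D := X 0
def a2 : D := X 1
def a3 : D := X 2
def a4 : D := X 3
def a6 : D := X 4

def b2 : D := a1 ^ 2 + 4 * a2
def b4 : D := 2 * a4 + a1 * a3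
def b6 : D := a3 ^ 2 + 4 * a6
def b8 : D := a1 ^ 2 * a6 + 4 * a2 * a6 - a1 * a3 * a4 + a2 * a3 ^ 2 - a4 ^ 2

def s : Sg := X 0
def t : Sg := X 1

/-- The right unit of the Hopf algebroid `(D, Σ)` presenting the moduli stack of cubic curves
with a chosen splitting of the Hodge–de Rham exact sequence: the effect of the coordinate change
`y ↦ y + s·x + t` on Weierstrass coefficients. -/
def φ : D →+* Sg :=
  (aeval ![C a1 + 2 * s,
           C a2 - s * C a1 - s ^ 2,
           C a3 + 2 * t,
           C a4 - s * C a3 - t * C a1 - 2 * s * t,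
           C a6 - t * C a3 - t ^ 2] : D →ₐ[ℤ] Sg).toRingHom

/-!
The invariants form a subring (`φ` and `C` are ring homomorphisms), and `b₂, b₄, b₆, b₈` are
invariant by direct computation. Conversely, specializing the coordinate change to
`s = -a₁/2, t = -a₃/2` (completing the square, over `ℚ`) kills `a₁` and `a₃`, so an invariant `f`
equals `f(0, b₂/4, 0, b₄/2, b₆/4)`: a `ℚ`-combination of the monomials `b₂^i b₄^ε b₆^j b₈^k` with
`ε ∈ {0, 1}` (as `b₄² = b₂b₆ - 4b₈`). For the lexicographic order with `a₁ > a₂ > a₃ > a₄ > a₆`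
these monomials are monic with pairwise distinct leading monomials `a₁^(2i+ε+2k) a₃^(2j+ε) a₆^k`,
so peeling off leading terms shows that the coefficients of the integral polynomial `f` in this
combination are integers.
-/

open MonomialOrder Finsupp Set

theorem Algebra.adjoin_le_span_of_mul_mem {R A : Type*} [CommSemiring R] [Semiring A]
    [Algebra R A] {s t : Set A} (one_mem : (1 : A) ∈ Submodule.span R t)
    (mul_mem : ∀ x ∈ s, ∀ y ∈ t, x * y ∈ Submodule.span R t) :
    Subalgebra.toSubmodule (Algebra.adjoin R s) ≤ Submodule.span R t := by
  have mul_mem_span : ∀ x ∈ s, ∀ y ∈ Submodule.span R t, x * y ∈ Submodule.span R t :=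
    fun x hx y hy =>
      (Submodule.span_le (p := (Submodule.span R t).comap (LinearMap.mulLeft R x))).mpr
        (mul_mem x hx) hy
  rw [Algebra.adjoin_eq_span, Submodule.span_le]
  intro z hz
  induction hz using Submonoid.closure_induction_left with
  | one => exact one_mem
  | mul_left x hx y _ ih => exact mul_mem_span x hx y ih

namespace MonomialOrder

variable {σ R : Type*} [CommRing R] {m : MonomialOrder σ}

variable (m) in
def IsMonicOfDegree (f : MvPolynomial σ R) (d : σ →₀ ℕ) : Prop :=
  m.Monic f ∧ m.degree f = d

lemma isMonicOfDegree_monomial_one [Nontrivial R] (d : σ →₀ ℕ) :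
    m.IsMonicOfDegree (monomial d (1 : R)) d := by
  classical
  exact ⟨monic_monomial_one, by simp [degree_monomial]⟩

lemma IsMonicOfDegree.add_monomial {f : MvPolynomial σ R} {d₀ d : σ →₀ ℕ}
    (hf : m.IsMonicOfDegree f d₀) (r : R) (hd : d ≺[m] d₀) :
    m.IsMonicOfDegree (f + monomial d r) d₀ := by
  have hlt : m.degree (monomial d r) ≺[m] m.degree f :=
    lt_of_le_of_lt (degree_monomial_le r) (hf.2 ▸ hd)
  exact ⟨hf.1.add_of_lt hlt, (degree_add_of_lt hlt).trans hf.2⟩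

lemma IsMonicOfDegree.mul [Nontrivial R] {f g : MvPolynomial σ R} {d d' : σ →₀ ℕ}
    (hf : m.IsMonicOfDegree f d) (hg : m.IsMonicOfDegree g d') :
    m.IsMonicOfDegree (f * g) (d + d') := by
  refine ⟨hf.1.mul hg.1, ?_⟩
  rw [degree_mul_of_mul_leadingCoeff_ne_zero, hf.2, hg.2]
  simp [hf.1.leadingCoeff_eq_one, hg.1.leadingCoeff_eq_one]

lemma IsMonicOfDegree.pow [Nontrivial R] {f : MvPolynomial σ R} {d : σ →₀ ℕ}
    (hf : m.IsMonicOfDegree f d) (n : ℕ) : m.IsMonicOfDegree (f ^ n) (n • d) := by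
  refine ⟨hf.1.pow, ?_⟩
  rw [degree_pow_of_pow_leadingCoeff_ne_zero, hf.2]
  simp [hf.1.leadingCoeff_eq_one]

variable (m) in
theorem mem_span_of_map_mem_span {K ι : Type*} [CommRing K] [Algebra R K]
    (hinj : Function.Injective (algebraMap R K)) {S : ι → MvPolynomial σ R}
    (hmonic : ∀ e, m.Monic (S e)) (hdeg : Function.Injective fun e => m.degree (S e))
    {f : MvPolynomial σ R}
    (hf : map (algebraMap R K) f ∈ Submodule.span K (range fun e => map (algebraMap R K) (S e))) :
    f ∈ Submodule.span R (range S) := by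
  classical
  obtain ⟨c, hc⟩ := Finsupp.mem_span_range_iff_exists_finsupp.mp hf
  suffices H : ∀ (u : Finset ι) (f : MvPolynomial σ R),
      map (algebraMap R K) f = ∑ e ∈ u, c e • map (algebraMap R K) (S e) →
      f ∈ Submodule.span R (range S) from H _ f hc.symm
  intro u
  induction u using Finset.induction_on_max_value (fun e => m.toSyn (m.degree (S e))) with
  | empty =>
    intro f hf
    rw [Finset.sum_empty, map_eq_zero_iff _ (map_injective _ hinj)] at hf
    simp [hf]
  | insert a u ha hmax ih =>
    intro f hf
    have hlt : ∀ x ∈ u, m.degree (S x) ≺[m] m.degree (S a) := fun x hx =>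
      lt_of_le_of_ne (hmax x hx) fun h => ha (hdeg (m.toSyn.injective h) ▸ hx)
    have hca : c a = algebraMap R K (f.coeff (m.degree (S a))) := by
      have := congrArg (coeff (m.degree (S a))) hf
      rw [Finset.sum_insert ha, coeff_add, coeff_sum, Finset.sum_eq_zero fun x hx => by
          rw [coeff_smul, coeff_map, m.coeff_eq_zero_of_lt (hlt x hx), map_zero, smul_zero],
        coeff_smul, coeff_map, coeff_map, (hmonic a).coeff_degree] at this
      simpa using this.symm
    have hrest : f - f.coeff (m.degree (S a)) • S a ∈ Submodule.span R (range S) := by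
      refine ih _ ?_
      rw [map_sub, smul_eq_C_mul, map_mul, map_C, ← hca, ← smul_eq_C_mul, hf,
        Finset.sum_insert ha, add_sub_cancel_left]
    simpa using add_mem hrest
      (Submodule.smul_mem _ (f.coeff (m.degree (S a))) (Submodule.subset_span ⟨a, rfl⟩))

end MonomialOrder

lemma lex_lt_of_apply_zero_lt {n : ℕ} {c d : Fin (n + 1) →₀ ℕ} (h : c 0 < d 0) : c ≺[lex] d :=
  Finsupp.Lex.lt_iff.mpr ⟨0, fun j hj => absurd hj (Fin.not_lt_zero j), h⟩

lemma φ_a1 : φ a1 = C a1 + 2 * s := by simp [φ, a1]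
lemma φ_a2 : φ a2 = C a2 - s * C a1 - s ^ 2 := by simp [φ, a2]
lemma φ_a3 : φ a3 = C a3 + 2 * t := by simp [φ, a3]
lemma φ_a4 : φ a4 = C a4 - s * C a3 - t * C a1 - 2 * s * t := by simp [φ, a4]
lemma φ_a6 : φ a6 = C a6 - t * C a3 - t ^ 2 := by simp [φ, a6]

lemma φ_b2 : φ b2 = C b2 := by
  simp only [b2, map_add, map_mul, map_pow, map_ofNat, φ_a1, φ_a2]
  ring

lemma φ_b4 : φ b4 = C b4 := by
  simp only [b4, map_add, map_mul, map_ofNat, φ_a1, φ_a3, φ_a4]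
  ring

lemma φ_b6 : φ b6 = C b6 := by
  simp only [b6, map_add, map_mul, map_pow, map_ofNat, φ_a3, φ_a6]
  ring

lemma φ_b8 : φ b8 = C b8 := by
  simp only [b8, map_add, map_sub, map_mul, map_pow, map_ofNat, φ_a1, φ_a2, φ_a3, φ_a4, φ_a6]
  ring

lemma invariant_of_mem_adjoin_b {f : D} (hf : f ∈ Algebra.adjoin ℤ ({b2, b4, b6, b8} : Set D)) :
    φ f = C f := by
  induction hf using Algebra.adjoin_induction with
  | mem x hx =>
    rcases hx with rfl | rfl | rfl | rfl
    exacts [φ_b2, φ_b4, φ_b6, φ_b8]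
  | algebraMap r => simp
  | add x y _ _ hx hy => rw [map_add, map_add, hx, hy]
  | mul x y _ _ hx hy => rw [map_mul, map_mul, hx, hy]

lemma b2_eq_monomials : b2 = monomial (single 0 2) 1 + monomial (single 1 1) 4 := by
  simp only [b2, a1, a2, ← C_mul_X_pow_eq_monomial, map_one, map_ofNat]
  ring

lemma b4_eq_monomials : b4 = monomial (single 0 1 + single 2 1) 1 + monomial (single 3 1) 2 := by
  simp only [b4, a1, a3, a4, monomial_add_single, ← C_mul_X_pow_eq_monomial, map_one, map_ofNat]
  ring

lemma b6_eq_monomials : b6 = monomial (single 2 2) 1 + monomial (single 4 1) 4 := by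
  simp only [b6, a3, a6, ← C_mul_X_pow_eq_monomial, map_one, map_ofNat]
  ring

lemma b8_eq_monomials :
    b8 = monomial (single 0 2 + single 4 1) 1 + monomial (single 1 1 + single 4 1) 4
      + monomial (single 0 1 + single 2 1 + single 3 1) (-1)
      + monomial (single 1 1 + single 2 2) 1 + monomial (single 3 2) (-1) := by
  simp only [b8, a1, a2, a3, a4, a6, monomial_add_single, ← C_mul_X_pow_eq_monomial, map_one,
    map_neg, map_ofNat]
  ring

lemma isMonicOfDegree_b2 : lex.IsMonicOfDegree b2 (single 0 2) := by
  rw [b2_eq_monomials]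
  exact (isMonicOfDegree_monomial_one _).add_monomial _ (lex_lt_of_apply_zero_lt (by simp))

lemma isMonicOfDegree_b4 : lex.IsMonicOfDegree b4 (single 0 1 + single 2 1) := by
  rw [b4_eq_monomials]
  exact (isMonicOfDegree_monomial_one _).add_monomial _ (lex_lt_of_apply_zero_lt (by simp))

lemma isMonicOfDegree_b6 : lex.IsMonicOfDegree b6 (single 2 2) := by
  rw [b6_eq_monomials]
  refine (isMonicOfDegree_monomial_one _).add_monomial _
    (lex_lt_iff.mpr (Finsupp.Lex.lt_iff.mpr ⟨2, fun j hj => ?_, by simp⟩))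
  fin_cases j <;> simp_all

lemma isMonicOfDegree_b8 : lex.IsMonicOfDegree b8 (single 0 2 + single 4 1) := by
  rw [b8_eq_monomials]
  refine ((((isMonicOfDegree_monomial_one _).add_monomial _ ?_).add_monomial _ ?_).add_monomial
    _ ?_).add_monomial _ ?_ <;> exact lex_lt_of_apply_zero_lt (by simp)

lemma b4_sq : b4 ^ 2 = b2 * b6 - 4 * b8 := by
  simp only [b2, b4, b6, b8]
  ring

def bMonomial : ℕ × Bool × ℕ × ℕ → D
  | (i, ε, j, k) => b2 ^ i * b4 ^ ε.toNat * b6 ^ j * b8 ^ k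

lemma isMonicOfDegree_bMonomial (i : ℕ) (ε : Bool) (j k : ℕ) :
    lex.IsMonicOfDegree (bMonomial (i, ε, j, k))
      (i • single 0 2 + ε.toNat • (single 0 1 + single 2 1) + j • single 2 2
        + k • (single 0 2 + single 4 1)) :=
  (((isMonicOfDegree_b2.pow i).mul (isMonicOfDegree_b4.pow _)).mul
    (isMonicOfDegree_b6.pow j)).mul (isMonicOfDegree_b8.pow k)

lemma degree_bMonomial_injective : Function.Injective fun e => lex.degree (bMonomial e) := by
  rintro ⟨i, ε, j, k⟩ ⟨i', ε', j', k'⟩ h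
  simp only [(isMonicOfDegree_bMonomial _ _ _ _).2] at h
  have h0 := DFunLike.congr_fun h 0
  have h2 := DFunLike.congr_fun h 2
  have h4 := DFunLike.congr_fun h 4
  simp only [smul_single, smul_add, Finsupp.coe_add, Pi.add_apply, single_eq_same, ne_eq,
    Fin.reduceEq, not_false_eq_true, single_eq_of_ne, add_zero, zero_add, smul_eq_mul, mul_one]
    at h0 h2 h4
  obtain rfl : ε = ε' := by
    cases ε <;> cases ε' <;> simp at h2 ⊢ <;> omega
  obtain ⟨rfl, rfl, rfl⟩ : i = i' ∧ j = j' ∧ k = k' := by omega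
  rfl

lemma mul_bMonomial_mem_span {b : D} (hb : b ∈ ({b2, b4, b6} : Set D)) (e : ℕ × Bool × ℕ × ℕ) :
    b * bMonomial e ∈ Submodule.span ℤ (range bMonomial) := by
  obtain ⟨i, ε, j, k⟩ := e
  have mem (e) : bMonomial e ∈ Submodule.span ℤ (range bMonomial) :=
    Submodule.subset_span ⟨e, rfl⟩
  rcases hb with rfl | rfl | rfl
  · convert mem (i + 1, ε, j, k) using 1
    simp only [bMonomial]
    ring
  · cases ε
    · convert mem (i, true, j, k) using 1
      simp only [bMonomial, Bool.toNat_true, Bool.toNat_false]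
      ring
    · convert sub_mem (mem (i + 1, false, j + 1, k)) (zsmul_mem (mem (i, false, j, k + 1)) 4)
        using 1
      simp only [bMonomial, Bool.toNat_true, Bool.toNat_false, zsmul_eq_mul]
      linear_combination b2 ^ i * b6 ^ j * b8 ^ k * b4_sq
  · convert mem (i, ε, j + 1, k) using 1
    simp only [bMonomial]
    ring

lemma span_bMonomial_le_adjoin :
    Submodule.span ℤ (range bMonomial) ≤
      Subalgebra.toSubmodule (Algebra.adjoin ℤ ({b2, b4, b6, b8} : Set D)) := by
  rw [Submodule.span_le]
  rintro _ ⟨⟨i, ε, j, k⟩, rfl⟩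
  rw [SetLike.mem_coe, Subalgebra.mem_toSubmodule]
  have mem {b} (hb : b ∈ ({b2, b4, b6, b8} : Set D)) := Algebra.subset_adjoin (R := ℤ) hb
  exact mul_mem (mul_mem (mul_mem (pow_mem (mem (by simp)) _) (pow_mem (mem (by simp)) _))
    (pow_mem (mem (by simp)) _)) (pow_mem (mem (by simp)) _)

abbrev Dℚ : Type := MvPolynomial (Fin 5) ℚ

def completeSquare : Sg →+* Dℚ :=
  eval₂Hom (map (algebraMap ℤ ℚ)) ![-(C 2⁻¹ * X 0), -(C 2⁻¹ * X 2)]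

def completedCoeffs : Fin 5 → Dℚ :=
  ![0, C 4⁻¹ * map (algebraMap ℤ ℚ) b2, 0, C 2⁻¹ * map (algebraMap ℤ ℚ) b4,
    C 4⁻¹ * map (algebraMap ℤ ℚ) b6]

lemma two_mul_C_inv_two : (2 : Dℚ) * C 2⁻¹ = 1 := by
  rw [← map_ofNat C 2, ← C_mul]
  norm_num

lemma C_inv_four_eq_sq : (C 4⁻¹ : Dℚ) = C 2⁻¹ ^ 2 := by
  rw [← map_pow]
  norm_num

lemma completeSquare_C (g : D) : completeSquare (C g) = map (algebraMap ℤ ℚ) g :=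
  eval₂Hom_C _ _ g

lemma completeSquare_s : completeSquare s = -(C 2⁻¹ * X 0) :=
  eval₂Hom_X' _ _ 0

lemma completeSquare_t : completeSquare t = -(C 2⁻¹ * X 2) :=
  eval₂Hom_X' _ _ 1

lemma completeSquare_φ_a1 : completeSquare (φ a1) = 0 := by
  rw [φ_a1]
  simp only [a1, map_add, map_mul, map_ofNat, completeSquare_C, completeSquare_s, map_X]
  linear_combination -X 0 * two_mul_C_inv_two

lemma completeSquare_φ_a2 : completeSquare (φ a2) = C 4⁻¹ * map (algebraMap ℤ ℚ) b2 := by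
  rw [φ_a2]
  simp only [b2, a1, a2, map_add, map_sub, map_mul, map_pow, map_ofNat, completeSquare_C,
    completeSquare_s, map_X]
  linear_combination -(X 1 * (2 * C 2⁻¹ + 1) + C 2⁻¹ * X 0 ^ 2) * two_mul_C_inv_two
    - (X 0 ^ 2 + 4 * X 1) * C_inv_four_eq_sq

lemma completeSquare_φ_a3 : completeSquare (φ a3) = 0 := by
  rw [φ_a3]
  simp only [a3, map_add, map_mul, map_ofNat, completeSquare_C, completeSquare_t, map_X]
  linear_combination -X 2 * two_mul_C_inv_two

lemma completeSquare_φ_a4 : completeSquare (φ a4) = C 2⁻¹ * map (algebraMap ℤ ℚ) b4 := by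
  rw [φ_a4]
  simp only [b4, a1, a3, a4, map_add, map_sub, map_mul, map_ofNat, completeSquare_C,
    completeSquare_s, completeSquare_t, map_X]
  linear_combination -(X 3 + C 2⁻¹ * X 0 * X 2) * two_mul_C_inv_two

lemma completeSquare_φ_a6 : completeSquare (φ a6) = C 4⁻¹ * map (algebraMap ℤ ℚ) b6 := by
  rw [φ_a6]
  simp only [b6, a3, a6, map_add, map_sub, map_mul, map_pow, map_ofNat, completeSquare_C,
    completeSquare_t, map_X]
  linear_combination -(X 4 * (2 * C 2⁻¹ + 1) + C 2⁻¹ * X 2 ^ 2) * two_mul_C_inv_two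
    - (X 2 ^ 2 + 4 * X 4) * C_inv_four_eq_sq

lemma completeSquare_comp_φ :
    completeSquare.comp φ = (aeval completedCoeffs).toRingHom.comp (map (algebraMap ℤ ℚ)) := by
  refine MvPolynomial.ringHom_ext' (RingHom.ext_int _ _) fun i => ?_
  simp only [RingHom.comp_apply, AlgHom.toRingHom_eq_coe, RingHom.coe_coe, map_X, aeval_X]
  fin_cases i
  exacts [completeSquare_φ_a1, completeSquare_φ_a2, completeSquare_φ_a3, completeSquare_φ_a4,
    completeSquare_φ_a6]

lemma completedCoeffs_mul_mem_span (i : Fin 5) (e : ℕ × Bool × ℕ × ℕ) :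
    completedCoeffs i * map (algebraMap ℤ ℚ) (bMonomial e) ∈
      Submodule.span ℚ (range fun e => map (algebraMap ℤ ℚ) (bMonomial e)) := by
  have key {b : D} (hb : b ∈ ({b2, b4, b6} : Set D)) (q : ℚ) :
      C q * map (algebraMap ℤ ℚ) b * map (algebraMap ℤ ℚ) (bMonomial e) ∈
        Submodule.span ℚ (range fun e => map (algebraMap ℤ ℚ) (bMonomial e)) := by
    rw [mul_assoc, ← map_mul, ← smul_eq_C_mul]
    refine Submodule.smul_mem _ q (Submodule.span_le_restrictScalars ℤ ℚ _ ?_)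
    have := Submodule.apply_mem_span_image_of_mem_span
      (map (algebraMap ℤ ℚ)).toIntAlgHom.toLinearMap (mul_bMonomial_mem_span hb e)
    rwa [← range_comp] at this
  fin_cases i
  · simp [completedCoeffs]
  · exact key (by simp) _
  · simp [completedCoeffs]
  · exact key (by simp) _
  · exact key (by simp) _

lemma adjoin_completedCoeffs_le_span :
    Subalgebra.toSubmodule (Algebra.adjoin ℚ (range completedCoeffs)) ≤
      Submodule.span ℚ (range fun e => map (algebraMap ℤ ℚ) (bMonomial e)) := by
  refine Algebra.adjoin_le_span_of_mul_mem
    (Submodule.subset_span ⟨(0, false, 0, 0), by simp [bMonomial]⟩) ?_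
  rintro _ ⟨i, rfl⟩ _ ⟨e, rfl⟩
  exact completedCoeffs_mul_mem_span i e

/-- A polynomial `f ∈ ℤ[a₁, a₂, a₃, a₄, a₆]` is invariant (i.e. `φ(f) = f`) if and only if it
lies in the subring `ℤ[b₂, b₄, b₆, b₈]` of integral quasimodular forms. -/
theorem invariant_iff_mem_adjoin_b (f : D) :
    φ f = C f ↔ f ∈ Algebra.adjoin ℤ ({b2, b4, b6, b8} : Set D) := by
  refine ⟨fun hf => ?_, invariant_of_mem_adjoin_b⟩
  have hmap : map (algebraMap ℤ ℚ) f = aeval completedCoeffs (map (algebraMap ℤ ℚ) f) :=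
    calc map (algebraMap ℤ ℚ) f = completeSquare (φ f) := by simp [hf, completeSquare]
      _ = _ := RingHom.congr_fun completeSquare_comp_φ f
  have hspan : map (algebraMap ℤ ℚ) f ∈
      Submodule.span ℚ (range fun e => map (algebraMap ℤ ℚ) (bMonomial e)) := by
    apply adjoin_completedCoeffs_le_span
    rw [Subalgebra.mem_toSubmodule, Algebra.adjoin_range_eq_range_aeval, hmap]
    exact AlgHom.mem_range_self _ _
  exact span_bMonomial_le_adjoin <| lex.mem_span_of_map_mem_span (algebraMap ℤ ℚ).injective_int
    (fun e => (isMonicOfDegree_bMonomial ..).1) degree_bMonomial_injective hspan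
end
end

section
/- Let π : ℤ[B₂,B₄,B₆,B₈] → ℤ[a₁,a₂,a₃,a₄,a₆] be the ring homomorphism sending B₂ ↦ b₂, B₄ ↦ b₄, B₆ ↦ b₆, B₈ ↦ b₈. Then the kernel of π is the ideal of ℤ[B₂,B₄,B₆,B₈] generated by the two elements 4B₈ − B₂B₆ + B₄² and 1728Δ − C₄³ + C₆². Consequently the ring of integral quasimodular forms ℤ[b₂,b₄,b₆,b₈] is isomorphic to ℤ[B₂,B₄,B₆,B₈]/(4B₈ − B₂B₆ + B₄², 1728Δ − C₄³ + C₆²). -/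
open MvPolynomial

noncomputable section

/-- `P = ℤ[B₂, B₄, B₆, B₈]`, with variables indexed `0 ↦ B₂, 1 ↦ B₄, 2 ↦ B₆, 3 ↦ B₈`. -/
abbrev P : Type := MvPolynomial (Fin 4) ℤ

def B2 : P := X 0
def B4 : P := X 1
def B6 : P := X 2
def B8 : P := X 3

def C4 : P := B2 ^ 2 - 24 * B4
def C6 : P := -B2 ^ 3 + 36 * B2 * B4 - 216 * B6
def Δ : P := -B2 ^ 2 * B8 - 8 * B4 ^ 3 - 27 * B6 ^ 2 + 9 * B2 * B4 * B6

/-- The map `π : ℤ[B₂, B₄, B₆, B₈] → ℤ[a₁, a₂, a₃, a₄, a₆]` sending `Bᵢ ↦ bᵢ`. -/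
def π : P →+* D := (aeval ![b2, b4, b6, b8] : P →ₐ[ℤ] D).toRingHom

/-!
Killing `a₁, a₃` and sending `a₂, a₄, a₆ ↦ B₂/4, B₄/2, B₆/4` gives a ring map `D → ℚ[B]` whose
composite with `π` is the substitution `B₈ ↦ (B₂B₆ − B₄²)/4`. So every `p ∈ ker π` vanishes under
this substitution and is therefore divisible over `ℚ` by `B₈ − (B₂B₆ − B₄²)/4`, a unit multiple of
`4B₈ − B₂B₆ + B₄²`. That relation is primitive (its `B₄²`-coefficient is `1`), so by Gauss's lemma
the divisibility already holds over `ℤ`. The second generator is `−432 B₂²` times the first.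
-/

namespace MvPolynomial

theorem X_sub_dvd_sub_aeval_update {R σ : Type*} [CommRing R] [DecidableEq σ]
    (p : MvPolynomial σ R) (i : σ) (r : MvPolynomial σ R) :
    X i - r ∣ p - aeval (Function.update X i r) p := by
  have hcomp : (Ideal.Quotient.mkₐ R (Ideal.span {X i - r})).comp
      (aeval (Function.update X i r)) = Ideal.Quotient.mkₐ R _ := by
    ext j
    by_cases h : j = i
    · subst h
      simpa [Ideal.Quotient.eq, Ideal.mem_span_singleton] using dvd_sub_comm.mp (dvd_refl _)
    · simp [Function.update_of_ne h]
  rw [← Ideal.mem_span_singleton, ← Ideal.Quotient.eq]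
  exact (DFunLike.congr_fun hcomp p).symm

section Gauss

variable {σ : Type*} {g p : MvPolynomial σ ℤ}

theorem dvd_of_dvd_C_prime_mul (hg : ∀ ℓ : ℤ, Prime ℓ → ¬ C ℓ ∣ g) {ℓ : ℤ} (hℓ : Prime ℓ)
    (h : g ∣ C ℓ * p) : g ∣ p := by
  obtain ⟨q, hq⟩ := h
  have hCℓ : Prime (C ℓ : MvPolynomial σ ℤ) := (prime_C_iff σ).mpr hℓ
  obtain ⟨q', rfl⟩ := (hCℓ.dvd_or_dvd ⟨p, hq.symm⟩).resolve_left (hg ℓ hℓ)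
  refine ⟨q', mul_left_cancel₀ hCℓ.ne_zero ?_⟩
  rw [hq]
  ring

theorem dvd_of_dvd_C_mul (hg : ∀ ℓ : ℤ, Prime ℓ → ¬ C ℓ ∣ g) {n : ℤ} (hn : n ≠ 0)
    (h : g ∣ C n * p) : g ∣ p := by
  induction n using UniqueFactorizationMonoid.induction_on_prime generalizing p with
  | h₁ => exact absurd rfl hn
  | h₂ u hu => exact (hu.map C).dvd_mul_left.mp h
  | h₃ a ℓ ha hℓ ih =>
    refine ih ha (dvd_of_dvd_C_prime_mul hg hℓ ?_)
    rwa [map_mul, mul_assoc] at h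

attribute [local instance] algebraMvPolynomial in
theorem dvd_of_map_dvd_map (hg : ∀ ℓ : ℤ, Prime ℓ → ¬ C ℓ ∣ g)
    (h : map (Int.castRingHom ℚ) g ∣ map (Int.castRingHom ℚ) p) : g ∣ p := by
  obtain ⟨Q, hQ⟩ := h
  obtain ⟨⟨q, _, ⟨n, hn, rfl⟩⟩, hq⟩ :=
    IsLocalization.surj ((nonZeroDivisors ℤ).map (C (σ := σ))) Q
  refine dvd_of_dvd_C_mul hg (nonZeroDivisors.ne_zero hn)
    ⟨q, map_injective (Int.castRingHom ℚ) Int.cast_injective ?_⟩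
  rw [algebraMap_def, algebraMap_int_eq] at hq
  rw [map_mul, map_mul, hQ, ← hq]
  ring

end Gauss

def quotientKerAevalEquivAdjoin {R A σ : Type*} [CommRing R] [CommRing A] [Algebra R A]
    (f : σ → A) :
    (MvPolynomial σ R ⧸ RingHom.ker (aeval (R := R) f)) ≃ₐ[R] Algebra.adjoin R (Set.range f) :=
  (Ideal.quotientKerEquivRange (aeval (R := R) f)).trans
    (Subalgebra.equivOfEq _ _ (Algebra.adjoin_range_eq_range_aeval R f).symm)

end MvPolynomial

def bRelation : P := 4 * B8 - B2 * B6 + B4 ^ 2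

theorem pi_bRelation : π bRelation = 0 := by
  simp only [π, bRelation, B2, B4, B6, B8, b2, b4, b6, b8, AlgHom.toRingHom_eq_coe, RingHom.coe_coe,
    map_add, map_sub, map_mul, map_pow, map_ofNat, aeval_X, Matrix.cons_val, Matrix.cons_val_zero,
    Matrix.cons_val_one, Fin.isValue]
  ring

theorem discriminant_relation_eq_mul_bRelation : 1728 * Δ - C4 ^ 3 + C6 ^ 2 = -432 * B2 ^ 2 * bRelation := by
  simp only [Δ, C4, C6, bRelation]
  ring

theorem not_C_prime_dvd_bRelation (ℓ : ℤ) (hℓ : Prime ℓ) : ¬ C ℓ ∣ bRelation := by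
  intro h
  have h1 : ℓ ∣ 1 := by simpa [bRelation, B2, B4, B6, B8] using map_dvd (eval ![0, 1, 0, 0]) h
  exact hℓ.not_isUnit (isUnit_of_dvd_one h1)

def b8Value : MvPolynomial (Fin 4) ℚ := C 4⁻¹ * (X 0 * X 2 - X 1 ^ 2)

theorem X_sub_b8Value : X 3 - b8Value = C 4⁻¹ * map (Int.castRingHom ℚ) bRelation := by
  have h4 : (C 4⁻¹ : MvPolynomial (Fin 4) ℚ) * 4 = 1 := by rw [← map_ofNat C, ← C_mul]; norm_num
  simp only [b8Value, bRelation, B2, B4, B6, B8, map_add, map_sub, map_mul, map_pow, map_X,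
    map_ofNat]
  linear_combination -X 3 * h4

def retraction : D →+* MvPolynomial (Fin 4) ℚ :=
  eval₂Hom (Int.castRingHom _) ![0, C 4⁻¹ * X 0, 0, C 2⁻¹ * X 1, C 4⁻¹ * X 2]

theorem retraction_comp_pi : retraction.comp π =
    (aeval (Function.update X 3 b8Value)).toRingHom.comp (map (Int.castRingHom ℚ)) := by
  have h4 : (C 4⁻¹ : MvPolynomial (Fin 4) ℚ) * 4 = 1 := by rw [← map_ofNat C, ← C_mul]; norm_num
  have h2 : (C 2⁻¹ : MvPolynomial (Fin 4) ℚ) * 2 = 1 := by rw [← map_ofNat C, ← C_mul]; norm_num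
  have h22 : (C 2⁻¹ : MvPolynomial (Fin 4) ℚ) ^ 2 = C 4⁻¹ := by rw [← C_pow]; norm_num
  apply ringHom_ext
  · simp
  · intro i
    fin_cases i <;>
      simp only [retraction, π, b2, b4, b6, b8, a1, a2, a3, a4, a6, b8Value, aeval_eq_bind₁,
        AlgHom.toRingHom_eq_coe, RingHom.coe_comp, coe_eval₂Hom, RingHom.coe_coe, Function.comp_apply,
        bind₁_X_right, map_X, eval₂_add, eval₂_sub, eval₂_mul, eval₂_pow, eval₂_X, eval₂_ofNat,
        Matrix.cons_val, Matrix.cons_val_zero, Matrix.cons_val_one, Fin.isValue, Fin.reduceFinMk,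
        Fin.zero_eta, Fin.mk_one, Fin.reduceEq, Function.update_self, Function.update_of_ne, ne_eq,
        not_false_eq_true, zero_pow, zero_mul, mul_zero, zero_add, add_zero, sub_zero,
        OfNat.ofNat_ne_zero]
    · linear_combination X 0 * h4
    · linear_combination X 1 * h2
    · linear_combination X 2 * h4
    · linear_combination C 4⁻¹ * X 0 * X 2 * h4 - X 1 ^ 2 * h22

theorem ker_pi_le_span_bRelation : RingHom.ker π ≤ Ideal.span {bRelation} := by
  intro p hp
  rw [Ideal.mem_span_singleton]
  refine dvd_of_map_dvd_map not_C_prime_dvd_bRelation ?_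
  have hsubst : aeval (Function.update X 3 b8Value) (map (Int.castRingHom ℚ) p) = 0 := by
    have h := DFunLike.congr_fun retraction_comp_pi p
    rw [RingHom.comp_apply, RingHom.mem_ker.mp hp, map_zero] at h
    exact h.symm
  calc map (Int.castRingHom ℚ) bRelation ∣ X 3 - b8Value :=
        X_sub_b8Value ▸ dvd_mul_left _ _
    _ ∣ map (Int.castRingHom ℚ) p := by
        simpa only [hsubst, sub_zero] using
          X_sub_dvd_sub_aeval_update (map (Int.castRingHom ℚ) p) 3 b8Value

theorem ker_pi_eq_span_bRelation : RingHom.ker π = Ideal.span {bRelation} :=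
  le_antisymm ker_pi_le_span_bRelation
    (Ideal.span_le.mpr (Set.singleton_subset_iff.mpr pi_bRelation))

/-- The kernel of `π` is generated by `4B₈ − B₂B₆ + B₄²` and `1728Δ − C₄³ + C₆²`; consequently
the ring of integral quasimodular forms `ℤ[b₂, b₄, b₆, b₈]` is isomorphic to the quotient of
`ℤ[B₂, B₄, B₆, B₈]` by these two relations. -/
theorem ker_pi_eq_span :
    RingHom.ker π =
      Ideal.span ({4 * B8 - B2 * B6 + B4 ^ 2, 1728 * Δ - C4 ^ 3 + C6 ^ 2} : Set P) ∧
    Nonempty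
      ((P ⧸ Ideal.span ({4 * B8 - B2 * B6 + B4 ^ 2, 1728 * Δ - C4 ^ 3 + C6 ^ 2} : Set P)) ≃+*
        Algebra.adjoin ℤ ({b2, b4, b6, b8} : Set D)) := by
  have hker : RingHom.ker π =
      Ideal.span ({4 * B8 - B2 * B6 + B4 ^ 2, 1728 * Δ - C4 ^ 3 + C6 ^ 2} : Set P) := by
    rw [discriminant_relation_eq_mul_bRelation, Ideal.span_pair_eq_span_left_iff_dvd.mpr (dvd_mul_left _ _)]
    exact ker_pi_eq_span_bRelation
  refine ⟨hker, ⟨(Ideal.quotEquivOfEq hker.symm).trans ?_⟩⟩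
  refine ((quotientKerAevalEquivAdjoin (R := ℤ) ![b2, b4, b6, b8]).trans
    (Subalgebra.equivOfEq _ _ ?_)).toRingEquiv
  simp only [Matrix.range_cons, Matrix.range_empty, Set.union_empty, Set.singleton_union]
end
end
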